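/- For every integer n ≥ 3, the cycle C_n is not opinionated; that is, every edge-friendly binary edge labeling of the cycle on n vertices leaves at least one vertex unlabeled under the induced partial vertex labeling. -/

import Mathlib

/-!
Edge-friendly labelings (Krop, Lee, Raridan).  A binary edge labeling of a
graph `G` is `f : Sym2 V → Fin 2` (only its values on edges matter).  For
`i : Fin 2`, `nbr G f i v` is the set `N_i(v)` of neighbors of `v` joined to
`v` by an `i`-edge, `edgeCount G f i` is `e_f(i)`, and `vertexLabel G f v` is
the induced partial vertex label `f⁺(v)` (with `none` meaning unlabeled).
-/

open Finset

attribute [local instance] Classical.propDecidable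

noncomputable section

namespace EdgeLabeling

variable {V : Type*} [Fintype V]

/-- `N_i(v)`: neighbors of `v` joined to `v` by an edge labeled `i`. -/
def nbr (G : SimpleGraph V) (f : Sym2 V → Fin 2) (i : Fin 2) (v : V) : Finset V :=
  Finset.univ.filter fun u => G.Adj v u ∧ f s(v, u) = i

/-- `e_f(i)`: the number of edges of `G` labeled `i`. -/
def edgeCount (G : SimpleGraph V) (f : Sym2 V → Fin 2) (i : Fin 2) : ℕ :=
  (G.edgeFinset.filter fun e => f e = i).card

/-- `f` is edge-friendly: `|e_f(0) - e_f(1)| ≤ 1`. -/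
def EdgeFriendly (G : SimpleGraph V) (f : Sym2 V → Fin 2) : Prop :=
  |(edgeCount G f 0 : ℤ) - (edgeCount G f 1 : ℤ)| ≤ 1

/-- The induced partial vertex labeling `f⁺`. -/
def vertexLabel (G : SimpleGraph V) (f : Sym2 V → Fin 2) (v : V) : Option (Fin 2) :=
  if (nbr G f 1 v).card < (nbr G f 0 v).card then some 0
  else if (nbr G f 0 v).card < (nbr G f 1 v).card then some 1
  else none

/-- `v` is unlabeled under the induced partial vertex labeling. -/
def Unlabeled (G : SimpleGraph V) (f : Sym2 V → Fin 2) (v : V) : Prop :=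
  vertexLabel G f v = none

/-- `v_f(i)`: the number of vertices labeled `i` by `f⁺`. -/
def vertexCount (G : SimpleGraph V) (f : Sym2 V → Fin 2) (i : Fin 2) : ℕ :=
  (Finset.univ.filter fun v => vertexLabel G f v = some i).card

/-- `G` is opinionated: some edge-friendly labeling leaves no vertex unlabeled. -/
def Opinionated (G : SimpleGraph V) : Prop :=
  ∃ f : Sym2 V → Fin 2, EdgeFriendly G f ∧ ∀ v : V, ¬ Unlabeled G f v

end EdgeLabeling

open EdgeLabeling

/-!
A vertex of degree two is labeled exactly when its two edges carry the same label. So if an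
edge labeling of a connected graph of maximum degree two labels every vertex, the label
propagates along walks and all edges get the same label; with at least two edges this is not
edge-friendly. The cycle `C_n`, `n ≥ 3`, is such a graph, with `n` edges.
-/

namespace EdgeLabeling

variable {V : Type*} {G : SimpleGraph V} {f : Sym2 V → Fin 2}

lemma label_eq_of_walk
    (hloc : ∀ v u w, G.Adj v u → G.Adj v w → f s(v, u) = f s(v, w)) {a b : V} (p : G.Walk a b)
    {x y : V} (hx : G.Adj a x) (hy : G.Adj b y) : f s(a, x) = f s(b, y) := by
  induction p generalizing x with
  | nil => exact hloc _ _ _ hx hy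
  | @cons a c b hac _ ih =>
    calc f s(a, x) = f s(a, c) := hloc _ _ _ hx hac
      _ = f s(c, a) := by rw [Sym2.eq_swap]
      _ = f s(b, y) := ih hac.symm hy

lemma label_eq_of_connected (hG : G.Connected)
    (hloc : ∀ v u w, G.Adj v u → G.Adj v w → f s(v, u) = f s(v, w))
    {e e' : Sym2 V} (he : e ∈ G.edgeSet) (he' : e' ∈ G.edgeSet) : f e = f e' := by
  induction e with | _ a x =>
  induction e' with | _ b y =>
  exact label_eq_of_walk hloc (hG.preconnected a b).some he he'

variable [Fintype V]

lemma unlabeled_iff {v : V} : Unlabeled G f v ↔ #(nbr G f 0 v) = #(nbr G f 1 v) := by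
  unfold Unlabeled vertexLabel
  split_ifs <;> simp only [false_iff, true_iff] <;> omega

lemma card_nbr_zero_add_card_nbr_one [DecidableRel G.Adj] (v : V) :
    #(nbr G f 0 v) + #(nbr G f 1 v) = G.degree v := by
  have hsplit := card_filter_add_card_filter_not (s := G.neighborFinset v)
    fun u => f s(v, u) = 0
  convert hsplit using 3
  · ext u
    simp [nbr]
  · ext u
    simp only [nbr, mem_filter, mem_univ, true_and, SimpleGraph.mem_neighborFinset,
      and_congr_right_iff]
    omega
  · exact (G.card_neighborFinset_eq_degree v).symm

lemma label_eq_of_not_unlabeled [DecidableRel G.Adj] {v u w : V} (hdeg : G.degree v ≤ 2)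
    (hv : ¬ Unlabeled G f v) (hu : G.Adj v u) (hw : G.Adj v w) : f s(v, u) = f s(v, w) := by
  have hsum := card_nbr_zero_add_card_nbr_one (G := G) (f := f) v
  rw [unlabeled_iff] at hv
  obtain ⟨i, hi⟩ : ∃ i, nbr G f i v = ∅ := by
    rcases (by omega : #(nbr G f 0 v) = 0 ∨ #(nbr G f 1 v) = 0) with h | h
    exacts [⟨0, card_eq_zero.mp h⟩, ⟨1, card_eq_zero.mp h⟩]
  have hne : ∀ x, G.Adj v x → f s(v, x) ≠ i := fun x hx hfx =>
    (Finset.eq_empty_iff_forall_notMem.mp hi) x (by simp [nbr, hx, hfx])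
  have := hne u hu
  have := hne w hw
  omega

lemma edgeCount_zero_add_edgeCount_one : edgeCount G f 0 + edgeCount G f 1 = #G.edgeFinset := by
  unfold edgeCount
  convert card_filter_add_card_filter_not (s := G.edgeFinset) fun e => f e = 0 using 3
  exact filter_congr fun e _ => by omega

lemma not_edgeFriendly_of_label_eq {c : Fin 2} (hcard : 2 ≤ #G.edgeFinset)
    (hc : ∀ e ∈ G.edgeSet, f e = c) : ¬ EdgeFriendly G f := by
  have hall : edgeCount G f c = #G.edgeFinset := by
    unfold edgeCount
    rw [filter_true_of_mem fun e he => hc e (G.mem_edgeFinset.mp he)]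
  have hsum := edgeCount_zero_add_edgeCount_one (G := G) (f := f)
  unfold EdgeFriendly
  rw [abs_le]
  obtain rfl | rfl : c = 0 ∨ c = 1 := by omega
  all_goals omega

theorem not_opinionated_of_degree_le_two [DecidableRel G.Adj] (hG : G.Connected)
    (hdeg : ∀ v, G.degree v ≤ 2) (hcard : 2 ≤ #G.edgeFinset) : ¬ Opinionated G := by
  rintro ⟨f, hf, hlabeled⟩
  obtain ⟨e₀, he₀⟩ := card_pos.mp (by omega : 0 < #G.edgeFinset)
  refine not_edgeFriendly_of_label_eq (c := f e₀) (by convert hcard) (fun e he => ?_) hf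
  exact label_eq_of_connected hG
    (fun v _ _ => label_eq_of_not_unlabeled (hdeg v) (hlabeled v)) he (G.mem_edgeFinset.mp he₀)

end EdgeLabeling

namespace SimpleGraph

lemma degree_cycleGraph {n : ℕ} [DecidableRel (cycleGraph n).Adj] (hn : 3 ≤ n) (v : Fin n) :
    (cycleGraph n).degree v = 2 := by
  obtain ⟨m, rfl⟩ : ∃ m, n = m + 3 := ⟨n - 3, by omega⟩
  convert cycleGraph_degree_three_le

lemma card_edgeFinset_cycleGraph {n : ℕ} [DecidableRel (cycleGraph n).Adj] (hn : 3 ≤ n) :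
    #(cycleGraph n).edgeFinset = n := by
  have hsum := (cycleGraph n).sum_degrees_eq_twice_card_edges
  simp only [degree_cycleGraph hn, sum_const, card_univ, Fintype.card_fin, smul_eq_mul] at hsum
  omega

end SimpleGraph

/-- For every `n ≥ 3`, the cycle `C_n` is not opinionated:
every edge-friendly labeling of the cycle on `n` vertices leaves at least one
vertex unlabeled. -/
theorem cycleGraph_not_opinionated (n : ℕ) (hn : 3 ≤ n) :
    ¬ Opinionated (SimpleGraph.cycleGraph n) ∧
      ∀ f : Sym2 (Fin n) → Fin 2, EdgeFriendly (SimpleGraph.cycleGraph n) f →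
        ∃ v : Fin n, Unlabeled (SimpleGraph.cycleGraph n) f v := by
  have hconn : (SimpleGraph.cycleGraph n).Connected := by
    obtain ⟨m, rfl⟩ : ∃ m, n = m + 1 := ⟨n - 1, by omega⟩
    exact SimpleGraph.cycleGraph_connected
  have hnot : ¬ Opinionated (SimpleGraph.cycleGraph n) :=
    not_opinionated_of_degree_le_two hconn (fun v => (SimpleGraph.degree_cycleGraph hn v).le)
      (by rw [SimpleGraph.card_edgeFinset_cycleGraph hn]; omega)
  exact ⟨hnot, fun f hf => not_forall_not.mp fun hlabeled => hnot ⟨f, hf, hlabeled⟩⟩
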